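/- arXiv:1409.3154 — 3 statements merged into one kernel-verified Lean document; each statement's English description precedes it below -/
import Mathlib

section
/- Let X be a subordinator (increasing Lévy process) which is not a compound Poisson process and with P{X_1 = 0} < 1. Then for every a > 0 and every r ≥ 0, E[e^{a T_r}] < ∞, where T_r is the first passage time of the level r. -/
/-!
Since `X` is nondecreasing, `T_r > n` forces `X n ≤ r`, so
`E[e^{a T_r}] ≤ 1 + ∑ₙ e^{a(n+1)} P{X n ≤ r}`. By Chernoff's bound and independence and
stationarity of the increments, `P{X n ≤ r} ≤ e^{λ r} ρ(λ)^n` with `ρ(λ) = E[e^{-λ X 1}]`.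
As `X 1 > 0` almost surely, `ρ(λ) → 0` when `λ → ∞`, so for large `λ` the series is
dominated by a convergent geometric series.
-/

open MeasureTheory ProbabilityTheory Set
open scoped ENNReal

/-- A (real-valued) Lévy process: càdlàg paths, `X 0 = 0`, stationary and independent
increments. -/
structure IsLevy {Ω : Type*} [MeasurableSpace Ω] (P : Measure Ω) (X : ℝ → Ω → ℝ) : Prop where
  meas : ∀ t, Measurable (X t)
  init : ∀ ω, X 0 ω = 0
  rightCont : ∀ ω, ∀ t : ℝ, ContinuousWithinAt (fun s => X s ω) (Set.Ici t) t
  leftLim : ∀ ω, ∀ t : ℝ, ∃ l : ℝ, Filter.Tendsto (fun s => X s ω) (nhdsWithin t (Set.Iio t)) (nhds l)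
  stationary : ∀ s t : ℝ, 0 ≤ s → s ≤ t →
    P.map (fun ω => X t ω - X s ω) = P.map (X (t - s))
  indepIncr : ∀ (n : ℕ) (t : ℕ → ℝ), Monotone t → 0 ≤ t 0 →
    iIndepFun
      (fun (i : Fin n) ω => X (t ((i : ℕ) + 1)) ω - X (t (i : ℕ)) ω) P

/-- First passage time of the level `r` by the path `t ↦ X t ω` (`inf ∅ = ∞`). -/
noncomputable def passageTime {Ω : Type*} (X : ℝ → Ω → ℝ) (r : ℝ) (ω : Ω) : ℝ≥0∞ :=
  sInf (ENNReal.ofReal '' {t : ℝ | 0 ≤ t ∧ r < X t ω})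

/-- `e^{a x}` for `x ∈ [0,∞]`, with value `∞` at `∞`. -/
noncomputable def eexp (a : ℝ) (x : ℝ≥0∞) : ℝ≥0∞ :=
  if x = ∞ then ∞ else ENNReal.ofReal (Real.exp (a * x.toReal))

open Real Filter Topology

lemma measure_le_le_exp_mul_lintegral {Ω : Type*} [MeasurableSpace Ω] {μ : Measure Ω}
    {Y : Ω → ℝ} (hY : Measurable Y) {l : ℝ} (hl : 0 ≤ l) (r : ℝ) :
    μ {ω | Y ω ≤ r}
      ≤ ENNReal.ofReal (exp (l * r)) * ∫⁻ ω, ENNReal.ofReal (exp (-l * Y ω)) ∂μ := by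
  have hS : MeasurableSet {ω | Y ω ≤ r} := measurableSet_le hY measurable_const
  have hg : Measurable fun ω => ENNReal.ofReal (exp (-l * Y ω)) :=
    (hY.const_mul (-l)).exp.ennreal_ofReal
  rw [← lintegral_const_mul _ hg, ← lintegral_indicator_one hS]
  refine lintegral_mono fun ω => ?_
  rw [indicator_apply]
  split_ifs with h
  · rw [Pi.one_apply, ← ENNReal.ofReal_mul (exp_nonneg _), ← exp_add]
    exact ENNReal.one_le_ofReal.2 (one_le_exp (by nlinarith [show Y ω ≤ r from h]))
  · exact zero_le

lemma tendsto_lintegral_exp_neg_natCast_mul {Ω : Type*} [MeasurableSpace Ω] {μ : Measure Ω}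
    [IsFiniteMeasure μ] {Y : Ω → ℝ} (hY : Measurable Y) (hpos : ∀ᵐ ω ∂μ, 0 < Y ω) :
    Tendsto (fun k : ℕ => ∫⁻ ω, ENNReal.ofReal (exp (-k * Y ω)) ∂μ) atTop (𝓝 0) := by
  rw [← lintegral_zero (μ := μ)]
  refine tendsto_lintegral_of_dominated_convergence (fun _ => 1)
    (fun k => ((hY.const_mul _).exp.ennreal_ofReal)) (fun k => ?_) (by simp) ?_
  · filter_upwards [hpos] with ω hω
    exact ENNReal.ofReal_le_one.2 (exp_le_one_iff.2 (by nlinarith [k.cast_nonneg (α := ℝ)]))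
  · filter_upwards [hpos] with ω hω
    have h : Tendsto (fun k : ℕ => -k * Y ω) atTop atBot := by
      simpa [Function.comp_def] using tendsto_neg_atTop_atBot.comp
        ((tendsto_natCast_atTop_atTop (R := ℝ)).atTop_mul_const hω)
    simpa [Function.comp_def] using
      (ENNReal.continuous_ofReal.tendsto 0).comp (tendsto_exp_atBot.comp h)

namespace IsLevy

variable {Ω : Type*} [MeasurableSpace Ω] {P : Measure Ω} {X : ℝ → Ω → ℝ}

lemma indepFun_sub_add_one (hX : IsLevy P X) {c : ℝ} (hc : 0 ≤ c) :
    IndepFun (X c) (fun ω => X (c + 1) ω - X c ω) P := by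
  -- the times `0, c, c + 1, c + 2, …`
  let t : ℕ → ℝ := fun k => (min k 1 : ℕ) * c + (k - 1 : ℕ)
  have ht : Monotone t :=
    ((Nat.mono_cast.comp (monotone_id.min monotone_const)).mul_const hc).add
      (Nat.mono_cast.comp fun _ _ h => Nat.sub_le_sub_right h 1)
  have h := (hX.indepIncr 2 t ht (by simp [t])).indepFun (show (0 : Fin 2) ≠ 1 by decide)
  simpa [t, hX.init] using h

lemma lintegral_comp_sub (hX : IsLevy P X) {f : ℝ → ℝ≥0∞} (hf : Measurable f) {s t : ℝ}
    (hs : 0 ≤ s) (hst : s ≤ t) :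
    ∫⁻ ω, f (X t ω - X s ω) ∂P = ∫⁻ ω, f (X (t - s) ω) ∂P := by
  have hincr : Measurable fun ω => X t ω - X s ω := (hX.meas t).sub (hX.meas s)
  rw [← lintegral_map hf hincr, hX.stationary s t hs hst,
    lintegral_map hf (hX.meas _)]

lemma lintegral_exp_neg_mul_natCast [IsProbabilityMeasure P] (hX : IsLevy P X) (l : ℝ)
    (n : ℕ) :
    ∫⁻ ω, ENNReal.ofReal (exp (-l * X n ω)) ∂P
      = (∫⁻ ω, ENNReal.ofReal (exp (-l * X 1 ω)) ∂P) ^ n := by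
  set f : ℝ → ℝ≥0∞ := fun x => ENNReal.ofReal (exp (-l * x))
  have hf : Measurable f := (measurable_id.const_mul _).exp.ennreal_ofReal
  induction n with
  | zero => simp [hX.init]
  | succ n ih =>
    have hsplit : ∀ ω, f (X (n + 1 : ℕ) ω) = f (X n ω) * f (X (n + 1) ω - X n ω) := by
      intro ω
      simp only [f]
      rw [← ENNReal.ofReal_mul (exp_nonneg _), ← exp_add]
      push_cast
      ring_nf
    calc ∫⁻ ω, f (X (n + 1 : ℕ) ω) ∂P
        = (∫⁻ ω, f (X n ω) ∂P) * ∫⁻ ω, f (X (n + 1) ω - X n ω) ∂P := by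
          simp_rw [hsplit]
          exact lintegral_mul_eq_lintegral_mul_lintegral_of_indepFun''
            (hf.comp (hX.meas _)).aemeasurable
            (hf.comp ((hX.meas _).sub (hX.meas _))).aemeasurable
            ((hX.indepFun_sub_add_one n.cast_nonneg).comp hf hf)
      _ = (∫⁻ ω, f (X 1 ω) ∂P) ^ (n + 1) := by
          rw [hX.lintegral_comp_sub hf n.cast_nonneg (by linarith), add_sub_cancel_left, ih,
            pow_succ]

lemma measure_le_le_exp_mul_pow [IsProbabilityMeasure P] (hX : IsLevy P X) {l : ℝ}
    (hl : 0 ≤ l) (r : ℝ) (n : ℕ) :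
    P {ω | X n ω ≤ r}
      ≤ ENNReal.ofReal (exp (l * r))
        * (∫⁻ ω, ENNReal.ofReal (exp (-l * X 1 ω)) ∂P) ^ n := by
  rw [← hX.lintegral_exp_neg_mul_natCast]
  exact measure_le_le_exp_mul_lintegral (hX.meas n) hl r

end IsLevy

section PassageTime

variable {Ω : Type*} {X : ℝ → Ω → ℝ} {r : ℝ} {ω : Ω}

lemma passageTime_le_ofReal {t : ℝ} (ht : 0 ≤ t) (h : r < X t ω) :
    passageTime X r ω ≤ ENNReal.ofReal t :=
  sInf_le ⟨t, ⟨ht, h⟩, rfl⟩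

lemma eexp_passageTime_le {a : ℝ} (ha : 0 ≤ a) :
    eexp a (passageTime X r ω)
      ≤ 1 + ∑' n : ℕ,
        {ω | X n ω ≤ r}.indicator (fun _ => ENNReal.ofReal (exp a) ^ (n + 1)) ω := by
  set S := ∑' n : ℕ,
    {ω | X n ω ≤ r}.indicator (fun _ => ENNReal.ofReal (exp a) ^ (n + 1)) ω
  have hind : ∀ n : ℕ, X n ω ≤ r →
      {ω | X n ω ≤ r}.indicator (fun _ => ENNReal.ofReal (exp a) ^ (n + 1)) ω
        = ENNReal.ofReal (exp a) ^ (n + 1) := fun n hn =>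
    indicator_of_mem (s := {ω | X n ω ≤ r}) hn _
  by_cases hT : passageTime X r ω = ∞
  · have hS : S = ∞ := by
      refine top_le_iff.1 ((ENNReal.tsum_const_eq_top_of_ne_zero one_ne_zero).symm.le.trans
        (ENNReal.tsum_le_tsum fun n => ?_))
      have hXn : X n ω ≤ r := not_lt.1 fun h => ENNReal.ofReal_ne_top
        (top_le_iff.1 (hT ▸ passageTime_le_ofReal n.cast_nonneg h))
      rw [hind n hXn]
      exact one_le_pow₀ (ENNReal.one_le_ofReal.2 (one_le_exp ha))
    simp [hS]
  rw [eexp, if_neg hT]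
  set u := (passageTime X r ω).toReal
  rcases (ENNReal.toReal_nonneg (a := passageTime X r ω)).eq_or_lt with hu | hu
  · simp [u, ← hu]
  -- `u ∈ (n, n + 1]`
  set n := ⌈u⌉₊ - 1
  have hn : (n : ℝ) + 1 = ⌈u⌉₊ := by
    rw [← Nat.cast_add_one, Nat.sub_add_cancel (Nat.ceil_pos.2 hu)]
  have hXn : X n ω ≤ r := not_lt.1 fun h => by
    have hun : u ≤ n := ENNReal.toReal_le_of_le_ofReal n.cast_nonneg
      (passageTime_le_ofReal n.cast_nonneg h)
    linarith [Nat.ceil_lt_add_one hu.le]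
  calc ENNReal.ofReal (exp (a * u)) ≤ ENNReal.ofReal (exp a) ^ (n + 1) := by
        rw [← ENNReal.ofReal_pow (exp_nonneg _), ← exp_nat_mul, Nat.cast_add_one, hn]
        exact ENNReal.ofReal_le_ofReal (exp_le_exp.2 (by nlinarith [Nat.le_ceil u]))
    _ ≤ S := (hind n hXn).symm.le.trans (ENNReal.le_tsum n)
    _ ≤ 1 + S := le_add_self

end PassageTime

lemma lintegral_eexp_passageTime_le {Ω : Type*} [MeasurableSpace Ω] {μ : Measure Ω}
    [IsProbabilityMeasure μ] {X : ℝ → Ω → ℝ} (hX : ∀ t, Measurable (X t)) {a : ℝ}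
    (ha : 0 ≤ a) (r : ℝ) :
    ∫⁻ ω, eexp a (passageTime X r ω) ∂μ
      ≤ 1 + ∑' n : ℕ, ENNReal.ofReal (exp a) ^ (n + 1) * μ {ω | X n ω ≤ r} := by
  have hS : ∀ n : ℕ, MeasurableSet {ω | X n ω ≤ r} := fun n =>
    measurableSet_le (hX n) measurable_const
  refine (lintegral_mono fun ω => eexp_passageTime_le ha).trans_eq ?_
  rw [lintegral_add_left measurable_const, lintegral_const, measure_univ, mul_one,
    lintegral_tsum fun n => (measurable_const.indicator (hS n)).aemeasurable]
  simp_rw [lintegral_indicator_const (hS _)]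

theorem stmt5_general {Ω : Type*} [MeasurableSpace Ω] (P : Measure Ω) [IsProbabilityMeasure P]
    (X : ℝ → Ω → ℝ) (hX : IsLevy P X)
    (hmono : ∀ ω ⦃s t : ℝ⦄, 0 ≤ s → s ≤ t → X s ω ≤ X t ω)
    (hnotCPP : P {ω | X 1 ω = 0} = 0)
    (a r : ℝ) (ha : 0 < a) :
    ∫⁻ ω, eexp a (passageTime X r ω) ∂P < ∞ := by
  have hX1 : ∀ᵐ ω ∂P, 0 < X 1 ω := by
    have hne : ∀ᵐ ω ∂P, X 1 ω ≠ 0 := ae_iff.2 (by simpa using hnotCPP)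
    filter_upwards [hne] with ω hω
    exact (hX.init ω ▸ hmono ω le_rfl zero_le_one).lt_of_ne' hω
  obtain ⟨k, hk⟩ := ((tendsto_lintegral_exp_neg_natCast_mul (hX.meas 1) hX1).eventually_lt_const
      (ENNReal.ofReal_pos.2 (exp_pos (-a)))).exists
  set ρ := ∫⁻ ω, ENNReal.ofReal (exp (-k * X 1 ω)) ∂P
  set E := ENNReal.ofReal (exp a)
  have hq : E * ρ < 1 := by
    calc E * ρ < E * ENNReal.ofReal (exp (-a)) :=
          ENNReal.mul_lt_mul_right (by positivity) ENNReal.ofReal_ne_top hk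
      _ = 1 := by
          rw [← ENNReal.ofReal_mul (exp_nonneg _), ← exp_add, add_neg_cancel, exp_zero,
            ENNReal.ofReal_one]
  calc ∫⁻ ω, eexp a (passageTime X r ω) ∂P
      ≤ 1 + ∑' n : ℕ, E ^ (n + 1) * P {ω | X n ω ≤ r} :=
        lintegral_eexp_passageTime_le hX.meas ha.le r
    _ ≤ 1 + ∑' n : ℕ, E ^ (n + 1) * (ENNReal.ofReal (exp (k * r)) * ρ ^ n) := by
        gcongr with n
        exact hX.measure_le_le_exp_mul_pow k.cast_nonneg r n
    _ = 1 + E * ENNReal.ofReal (exp (k * r)) * ∑' n : ℕ, (E * ρ) ^ n := by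
        rw [← ENNReal.tsum_mul_left]
        congr 1
        exact tsum_congr fun n => by ring
    _ < ∞ := by
        rw [ENNReal.tsum_geometric]
        exact ENNReal.add_lt_top.2 ⟨ENNReal.one_lt_top, ENNReal.mul_lt_top
          (ENNReal.mul_lt_top ENNReal.ofReal_lt_top ENNReal.ofReal_lt_top)
          (ENNReal.inv_lt_top.2 (tsub_pos_of_lt hq))⟩

/-- If `X` is a subordinator which is not a compound Poisson process (equivalently, a
nondegenerate subordinator with `P{X_1 = 0} = 0`), then `E[e^{a T_r}] < ∞` for all `a > 0`,
`r ≥ 0`. -/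
theorem stmt5 {Ω : Type*} [MeasurableSpace Ω] (P : Measure Ω) [IsProbabilityMeasure P]
    (X : ℝ → Ω → ℝ) (hX : IsLevy P X)
    (hmono : ∀ ω ⦃s t : ℝ⦄, 0 ≤ s → s ≤ t → X s ω ≤ X t ω)
    (hnotCPP : P {ω | X 1 ω = 0} = 0)
    (a r : ℝ) (ha : 0 < a) (hr : 0 ≤ r) :
    ∫⁻ ω, eexp a (passageTime X r ω) ∂P < ∞ :=
  stmt5_general P X hX hmono hnotCPP a r ha
end

section
/- Let X be a Lévy process and fix a > 0, r ∈ ℝ. For n ∈ ℕ let I_n = inf_{n−1≤t≤n}(X_t − X_{n−1}) and S_n = sup_{n−1≤t≤n}(X_t − X_{n−1}). Then (1/2)·E[V_a^1(r − S_1)] ≤ ∫_1^∞ e^{at} t^{−1} P{X_t ≤ r} dt ≤ e^a·E[V_a^1(r − I_1)], where V_a^1(x) = Σ_{n≥1} e^{an} n^{−1} P{X_n ≤ x}. -/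
/-!
Cut `(1, ∞)` into the unit intervals `(n, n + 1]`. There `e^{at}/t` lies between `e^{an}/(n + 1)`
and `e^{a(n+1)}/n`, and `{sup_{[n,n+1]} X ≤ r} ⊆ {X_t ≤ r} ⊆ {inf_{[n,n+1]} X ≤ r}`. Writing
`sup_{[n,n+1]} X = X_n + (sup_{[n,n+1]} X - X_n)`, the second summand is independent of `X_n` and
distributed as `S_1`, so `P{sup_{[n,n+1]} X ≤ r} = E[P{X_n ≤ r - S_1}]` is the `n`-th term of
`E[V_a^1(r - S_1)]`; likewise for the infimum and `I_1`, which is the supremum of `-X`.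
By right-continuity the supremum of the increments is determined by their values on the dyadic
grids of `[n, n + 1]`, and both the independence and the law are inherited from these finite
grids, where they follow from the independence and stationarity of increments.
-/

open MeasureTheory ProbabilityTheory Set
open scoped ENNReal

/-- `V_a^1(x) = Σ_{n≥1} e^{an} n⁻¹ P{X_n ≤ x}`. -/
noncomputable def Vharm {Ω : Type*} [MeasurableSpace Ω] (P : Measure Ω) (X : ℝ → Ω → ℝ)
    (a x : ℝ) : ℝ≥0∞ :=
  ∑' n : ℕ, ENNReal.ofReal (Real.exp (a * (n + 1)) / (n + 1)) * P {ω | X (n + 1 : ℕ) ω ≤ x}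

open Filter Topology

lemma isBounded_image_Icc_of_cadlag {f : ℝ → ℝ} (hr : ∀ t, ContinuousWithinAt f (Ici t) t)
    (hl : ∀ t, ∃ l, Tendsto f (𝓝[<] t) (𝓝 l)) (a b : ℝ) :
    Bornology.IsBounded (f '' Icc a b) := by
  have hloc : ∀ x ∈ Icc a b, ∃ U ∈ 𝓝 x, Bornology.IsBounded (f '' U) := by
    intro x _
    obtain ⟨l, hl⟩ := hl x
    obtain ⟨u, hu, hu'⟩ := (nhdsLT_basis_of_exists_lt ⟨x - 1, by linarith⟩).eventually_iff.mp
      (hl (Metric.ball_mem_nhds l one_pos))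
    obtain ⟨v, hv, hv'⟩ := (nhdsGE_basis_Ico x).eventually_iff.mp
      ((hr x).tendsto (Metric.ball_mem_nhds (f x) one_pos))
    refine ⟨Ioo u v, Ioo_mem_nhds hu hv, ?_⟩
    refine ((Metric.isBounded_ball (x := l) (r := 1)).union
      (Metric.isBounded_ball (x := f x) (r := 1))).subset ?_
    rintro - ⟨s, hs, rfl⟩
    rcases lt_or_ge s x with h | h
    · exact Or.inl (hu' ⟨hs.1, h⟩)
    · exact Or.inr (hv' ⟨h, hs.2⟩)
  choose! U hU hUb using hloc
  obtain ⟨c, hc⟩ := isCompact_Icc.elim_nhds_subcover' (fun x _ => U x) (fun x hx => hU x hx)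
  refine ((Bornology.isBounded_biUnion c.finite_toSet).2 fun x _ => hUb x x.2).subset ?_
  rintro - ⟨s, hs, rfl⟩
  obtain ⟨x, hx⟩ := mem_iUnion₂.mp (hc hs)
  exact mem_iUnion₂.mpr ⟨x, hx.1, mem_image_of_mem f hx.2⟩

lemma exists_dyadic_mem_Ico {u t δ : ℝ} (hut : u ≤ t) (htu : t < u + 1) (hδ : 0 < δ) :
    ∃ K : ℕ, ∃ i : Fin (2 ^ K + 1), u + (i : ℕ) / 2 ^ K ∈ Ico t (t + δ) := by
  obtain ⟨K, hK⟩ := exists_pow_lt_of_lt_one hδ (by norm_num : (2 : ℝ)⁻¹ < 1)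
  have h2K : (0 : ℝ) < 2 ^ K := by positivity
  set i := ⌈(t - u) * 2 ^ K⌉₊
  have hi : i < 2 ^ K + 1 := by
    rw [Nat.lt_succ_iff, Nat.ceil_le]
    push_cast
    nlinarith
  have hi_ge : (t - u) * 2 ^ K ≤ i := Nat.le_ceil _
  have hi_lt : (i : ℝ) < (t - u) * 2 ^ K + 1 := Nat.ceil_lt_add_one (by nlinarith)
  have hKδ : 1 / (2 : ℝ) ^ K < δ := by rwa [one_div, ← inv_pow]
  refine ⟨K, ⟨i, hi⟩, ?_, ?_⟩
  · have : t - u ≤ i / 2 ^ K := by rwa [le_div_iff₀ h2K]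
    linarith
  · have : (i : ℝ) / 2 ^ K < t - u + 1 / 2 ^ K := by
      rw [div_lt_iff₀ h2K, add_mul, one_div_mul_cancel h2K.ne']
      exact hi_lt
    linarith

lemma csSup_image_Icc_le_iff_dyadic {f : ℝ → ℝ} (hf : ∀ t, ContinuousWithinAt f (Ici t) t)
    {u : ℝ} (hbdd : BddAbove (f '' Icc u (u + 1))) {b : ℝ} :
    sSup (f '' Icc u (u + 1)) ≤ b ↔
      ∀ K : ℕ, ∀ i : Fin (2 ^ K + 1), f (u + (i : ℕ) / 2 ^ K) ≤ b := by
  have hmem (K : ℕ) (i : Fin (2 ^ K + 1)) : u + (i : ℕ) / 2 ^ K ∈ Icc u (u + 1) := by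
    have : ((i : ℕ) : ℝ) ≤ 2 ^ K := by exact_mod_cast Nat.lt_succ_iff.mp i.is_lt
    constructor
    · have : (0 : ℝ) ≤ (i : ℕ) / 2 ^ K := by positivity
      linarith
    · have : ((i : ℕ) : ℝ) / 2 ^ K ≤ 1 := (div_le_one (by positivity)).mpr this
      linarith
  rw [csSup_le_iff hbdd ((nonempty_Icc.2 (by linarith)).image f), forall_mem_image]
  refine ⟨fun h K i => h (hmem K i), fun h t ht => ?_⟩
  by_contra! hbt
  rcases ht.2.eq_or_lt with rfl | htu
  · exact hbt.not_ge (by simpa using h 0 1)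
  · obtain ⟨v, hv, hsub⟩ :=
      mem_nhdsGE_iff_exists_Ico_subset.1 ((hf t).eventually_const_lt hbt)
    obtain ⟨K, i, hi⟩ := exists_dyadic_mem_Ico ht.1 htu (sub_pos.2 hv)
    exact (h K i).not_gt (hsub ⟨hi.1, by linarith [hi.2]⟩)

lemma Fin.partialSum_sub_telescope {n : ℕ} (g : ℕ → ℝ) (i : Fin (n + 1)) :
    Fin.partialSum (fun j : Fin n => g (j + 1) - g j) i = g i - g 0 := by
  induction i using Fin.induction with
  | zero => simp
  | succ j ih =>
    rw [Fin.partialSum_succ, ih]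
    simp only [Fin.val_succ, Fin.val_castSucc]
    ring

lemma measurable_partialSum {n : ℕ} :
    Measurable (Fin.partialSum : (Fin n → ℝ) → Fin (n + 1) → ℝ) := by
  refine measurable_pi_lambda _ fun i => ?_
  induction i using Fin.induction with
  | zero => simp
  | succ j ih =>
    simp only [Fin.partialSum_succ]
    exact ih.add (measurable_pi_apply j)

section Independence

variable {Ω : Type*} [MeasurableSpace Ω] {P : Measure Ω}

lemma ProbabilityTheory.iIndepFun.indepFun_zero_succ {β : Type*} [MeasurableSpace β] {n : ℕ}
    {W : Fin (n + 1) → Ω → β} (hW : iIndepFun W P) (hmeas : ∀ i, Measurable (W i)) :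
    IndepFun (W 0) (fun ω (j : Fin n) => W j.succ ω) P := by
  have hdisj : Disjoint ({0} : Set (Fin (n + 1))) (range Fin.succ) := by
    rw [disjoint_singleton_left]
    rintro ⟨j, hj⟩
    exact Fin.succ_ne_zero j hj
  have h := indep_iSup_of_disjoint (fun i => (hmeas i).comap_le) hW.iIndep hdisj
  rw [IndepFun_iff_Indep]
  refine indep_of_indep_of_le_right (indep_of_indep_of_le_left h ?_) ?_
  · exact le_iSup₂ (f := fun i (_ : i ∈ ({0} : Set (Fin (n + 1)))) =>
      MeasurableSpace.comap (W i) inferInstance) 0 rfl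
  · simp only [MeasurableSpace.pi, MeasurableSpace.comap_iSup, MeasurableSpace.comap_comp]
    exact iSup_le fun j => le_iSup₂ (f := fun i (_ : i ∈ range Fin.succ) =>
      MeasurableSpace.comap (W i) inferInstance) j.succ ⟨j, rfl⟩

lemma measure_add_le_eq_lintegral [IsProbabilityMeasure P] {Y Z Z' : Ω → ℝ}
    (hY : AEMeasurable Y P) (hYZ : IndepFun Y Z P) (hZ : IdentDistrib Z Z' P P) (r : ℝ) :
    P {ω | Y ω + Z ω ≤ r} = ∫⁻ ω, P {ω' | Y ω' ≤ r - Z' ω} ∂P := by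
  have hS : MeasurableSet {p : ℝ × ℝ | p.1 + p.2 ≤ r} :=
    measurableSet_le (measurable_fst.add measurable_snd) measurable_const
  have hcdf : Antitone fun z => P.map Y (Iic (r - z)) :=
    fun z z' h => measure_mono (Iic_subset_Iic.2 (by linarith))
  have := Measure.isProbabilityMeasure_map (μ := P) hY
  have := Measure.isProbabilityMeasure_map (μ := P) hZ.aemeasurable_fst
  calc P {ω | Y ω + Z ω ≤ r}
      = P.map (fun ω => (Y ω, Z ω)) {p | p.1 + p.2 ≤ r} :=
        (Measure.map_apply_of_aemeasurable (hY.prodMk hZ.aemeasurable_fst) hS).symm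
    _ = ∫⁻ z, P.map Y (Iic (r - z)) ∂(P.map Z) := by
        rw [(indepFun_iff_map_prod_eq_prod_map_map hY hZ.aemeasurable_fst).1 hYZ,
          Measure.prod_apply_symm hS]
        refine lintegral_congr fun z => congrArg _ ?_
        ext x
        simp [le_sub_iff_add_le]
    _ = ∫⁻ ω, P {ω' | Y ω' ≤ r - Z' ω} ∂P := by
        rw [hZ.map_eq, lintegral_map' hcdf.measurable.aemeasurable hZ.aemeasurable_snd]
        congr! 2 with ω
        exact Measure.map_apply_of_aemeasurable hY measurableSet_Iic

end Independence

section Paths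

variable {Ω : Type*} (X : ℝ → Ω → ℝ)

noncomputable def dyadicGrid (u : ℝ) (K : ℕ) (ω : Ω) (i : Fin (2 ^ K + 1)) : ℝ :=
  X (u + (i : ℕ) / 2 ^ K) ω - X u ω

noncomputable def pathSup (u : ℝ) (ω : Ω) : ℝ := sSup ((fun t => X t ω) '' Icc u (u + 1))

noncomputable def pathInf (u : ℝ) (ω : Ω) : ℝ := sInf ((fun t => X t ω) '' Icc u (u + 1))

variable {X}

lemma pathSup_neg (u : ℝ) (ω : Ω) : pathSup (fun t ω => -X t ω) u ω = -pathInf X u ω := by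
  rw [pathSup, pathInf, ← Real.sSup_neg, ← image_neg_eq_neg, image_image]

lemma dyadicGrid_eq_partialSum (u : ℝ) (K : ℕ) (ω : Ω) :
    dyadicGrid X u K ω = Fin.partialSum fun j : Fin (2 ^ K) =>
      X (u + ((j + 1 : ℕ) : ℝ) / 2 ^ K) ω - X (u + (j : ℕ) / 2 ^ K) ω := by
  ext i
  rw [Fin.partialSum_sub_telescope (fun k : ℕ => X (u + k / 2 ^ K) ω), dyadicGrid]
  simp

lemma dyadicGrid_succ_double (u : ℝ) (K : ℕ) (ω : Ω) (i : Fin (2 ^ K + 1)) :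
    dyadicGrid X u (K + 1) ω ⟨2 * i, by rw [pow_succ]; omega⟩ = dyadicGrid X u K ω i := by
  simp only [dyadicGrid, pow_succ]
  push_cast
  field_simp

lemma comap_dyadicGrid_mono (u : ℝ) :
    Monotone fun K => MeasurableSpace.pi.comap (dyadicGrid X u K) := by
  refine monotone_nat_of_le_succ fun K => ?_
  have hr : Measurable fun (v : Fin (2 ^ (K + 1) + 1) → ℝ) (i : Fin (2 ^ K + 1)) =>
      v ⟨2 * i, by rw [pow_succ]; omega⟩ :=
    measurable_pi_lambda _ fun _ => measurable_pi_apply _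
  have hcomp : (fun (v : Fin (2 ^ (K + 1) + 1) → ℝ) (i : Fin (2 ^ K + 1)) =>
      v ⟨2 * i, by rw [pow_succ]; omega⟩) ∘ dyadicGrid X u (K + 1) = dyadicGrid X u K := by
    funext ω i
    exact dyadicGrid_succ_double u K ω i
  rw [← hcomp, ← MeasurableSpace.comap_comp]
  exact MeasurableSpace.comap_mono hr.comap_le

lemma antitone_preimage_dyadicGrid (u b : ℝ) :
    Antitone fun K => dyadicGrid X u K ⁻¹' univ.pi fun _ => Iic b := by
  refine antitone_nat_of_succ_le fun K ω hω i _ => ?_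
  rw [← dyadicGrid_succ_double]
  exact hω _ (mem_univ _)

end Paths

namespace IsLevy

variable {Ω : Type*} [MeasurableSpace Ω] {P : Measure Ω} {X : ℝ → Ω → ℝ}

lemma neg (hX : IsLevy P X) : IsLevy P (fun t ω => -X t ω) where
  meas t := (hX.meas t).neg
  init ω := by simp [hX.init ω]
  rightCont ω t := (hX.rightCont ω t).neg
  leftLim ω t := let ⟨l, hl⟩ := hX.leftLim ω t; ⟨-l, hl.neg⟩
  stationary s t hs hst := by
    have h := congrArg (Measure.map Neg.neg) (hX.stationary s t hs hst)
    rw [Measure.map_map measurable_neg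
        (show Measurable fun ω => X t ω - X s ω from (hX.meas t).sub (hX.meas s)),
      Measure.map_map measurable_neg (hX.meas _)] at h
    convert h using 2
    · funext ω
      exact (neg_sub_neg _ _).trans (neg_sub _ _).symm
    · rfl
  indepIncr n t ht h0 := by
    convert (hX.indepIncr n t ht h0).comp (fun _ => Neg.neg) (fun _ => measurable_neg) using 2
      with i
    funext ω
    exact (neg_sub_neg _ _).trans (neg_sub _ _).symm

lemma isBounded_image_Icc (hX : IsLevy P X) (ω : Ω) (a b : ℝ) :
    Bornology.IsBounded ((fun t => X t ω) '' Icc a b) :=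
  isBounded_image_Icc_of_cadlag (hX.rightCont ω) (hX.leftLim ω) a b

lemma indepFun_incr (hX : IsLevy P X) {τ : ℕ → ℝ} (hτ : Monotone τ) (h0 : 0 ≤ τ 0) (n : ℕ) :
    IndepFun (X (τ 0)) (fun ω (j : Fin n) => X (τ (j + 1)) ω - X (τ j) ω) P := by
  let t : ℕ → ℝ := fun | 0 => 0 | j + 1 => τ j
  have ht : Monotone t := monotone_nat_of_le_succ fun | 0 => h0 | j + 1 => hτ j.le_succ
  have h := (hX.indepIncr (n + 1) t ht le_rfl).indepFun_zero_succ
    fun i => (hX.meas _).sub (hX.meas _)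
  simpa [t, hX.init] using h

lemma map_incr (hX : IsLevy P X) [IsProbabilityMeasure P] {τ : ℕ → ℝ} (hτ : Monotone τ)
    (h0 : 0 ≤ τ 0) {δ : ℝ} (hδ : ∀ j, τ (j + 1) - τ j = δ) (n : ℕ) :
    P.map (fun ω (j : Fin n) => X (τ (j + 1)) ω - X (τ j) ω) = Measure.pi fun _ => P.map (X δ) := by
  rw [(iIndepFun_iff_map_fun_eq_pi_map fun j : Fin n =>
    (show Measurable fun ω => X (τ (j + 1)) ω - X (τ j) ω from
      (hX.meas _).sub (hX.meas _)).aemeasurable).1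
    (hX.indepIncr n τ hτ h0)]
  refine congrArg Measure.pi (funext fun j => ?_)
  rw [hX.stationary _ _ (h0.trans (hτ (Nat.zero_le _))) (hτ (by omega : (j : ℕ) ≤ j + 1)), hδ]

lemma measurable_dyadicGrid (hX : IsLevy P X) (u : ℝ) (K : ℕ) : Measurable (dyadicGrid X u K) :=
  measurable_pi_lambda _ fun _ => (hX.meas _).sub (hX.meas _)

lemma indepFun_dyadicGrid (hX : IsLevy P X) {u : ℝ} (hu : 0 ≤ u) (K : ℕ) :
    IndepFun (X u) (dyadicGrid X u K) P := by
  have h := (hX.indepFun_incr (τ := fun k : ℕ => u + k / 2 ^ K)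
    (fun i j hij => by dsimp only; gcongr) (by simpa using hu) (2 ^ K)).comp
    measurable_id measurable_partialSum
  convert h using 1
  · simp
  · funext ω
    exact dyadicGrid_eq_partialSum u K ω

lemma map_dyadicGrid (hX : IsLevy P X) [IsProbabilityMeasure P] {u : ℝ} (hu : 0 ≤ u) (K : ℕ) :
    P.map (dyadicGrid X u K) = P.map (dyadicGrid X 0 K) := by
  have hmap (v : ℝ) (hv : 0 ≤ v) :
      P.map (dyadicGrid X v K) =
        (Measure.pi fun _ => P.map (X (1 / 2 ^ K))).map Fin.partialSum := by
    rw [← hX.map_incr (τ := fun k : ℕ => v + k / 2 ^ K) (fun i j hij => by dsimp only; gcongr)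
      (by simpa using hv) (fun j => by push_cast; ring) (2 ^ K),
      Measure.map_map measurable_partialSum (show Measurable fun ω (j : Fin (2 ^ K)) =>
        X (v + ((j + 1 : ℕ) : ℝ) / 2 ^ K) ω - X (v + (j : ℕ) / 2 ^ K) ω from
        measurable_pi_lambda _ fun _ => (hX.meas _).sub (hX.meas _))]
    exact congrArg (Measure.map · P) (funext (dyadicGrid_eq_partialSum v K))
  rw [hmap u hu, hmap 0 le_rfl]

lemma preimage_pathSup_sub_Iic (hX : IsLevy P X) (u b : ℝ) :
    (fun ω => pathSup X u ω - X u ω) ⁻¹' Iic b =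
      ⋂ K, dyadicGrid X u K ⁻¹' univ.pi fun _ => Iic b := by
  ext ω
  simp only [mem_iInter, mem_preimage, mem_univ_pi, mem_Iic, dyadicGrid,
    sub_le_iff_le_add, pathSup]
  exact csSup_image_Icc_le_iff_dyadic (hX.rightCont ω) (hX.isBounded_image_Icc ω _ _).bddAbove

lemma measurable_pathSup_sub_iSup (hX : IsLevy P X) (u : ℝ) :
    Measurable[⨆ K, MeasurableSpace.pi.comap (dyadicGrid X u K)]
      fun ω => pathSup X u ω - X u ω := by
  refine @measurable_of_Iic _ _ _ _ _ (⨆ K, MeasurableSpace.pi.comap (dyadicGrid X u K)) _ _ _ _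
    fun b => ?_
  rw [hX.preimage_pathSup_sub_Iic u b]
  exact MeasurableSet.iInter fun K => le_iSup (fun K => MeasurableSpace.pi.comap (dyadicGrid X u K))
    K _ ⟨_, MeasurableSet.univ_pi fun _ => measurableSet_Iic, rfl⟩

lemma measurable_pathSup_sub (hX : IsLevy P X) (u : ℝ) :
    Measurable fun ω => pathSup X u ω - X u ω :=
  (hX.measurable_pathSup_sub_iSup u).mono
    (iSup_le fun K => (hX.measurable_dyadicGrid u K).comap_le) le_rfl

lemma measurable_pathSup (hX : IsLevy P X) (u : ℝ) : Measurable (pathSup X u) := by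
  convert (hX.measurable_pathSup_sub u).add (hX.meas u) using 1
  ext ω
  simp

lemma measurable_pathInf (hX : IsLevy P X) (u : ℝ) : Measurable (pathInf X u) := by
  convert (hX.neg.measurable_pathSup u).neg using 1
  ext ω
  simp [pathSup_neg]

theorem indepFun_pathSup_sub (hX : IsLevy P X) [IsProbabilityMeasure P] {u : ℝ} (hu : 0 ≤ u) :
    IndepFun (X u) (fun ω => pathSup X u ω - X u ω) P := by
  have h := indep_iSup_of_directed_le
    (fun K => ((IndepFun_iff_Indep _ _ _).1 (hX.indepFun_dyadicGrid hu K)).symm)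
    (fun K => (hX.measurable_dyadicGrid u K).comap_le) (hX.meas u).comap_le
    (comap_dyadicGrid_mono u).directed_le
  rw [IndepFun_iff_Indep]
  exact (indep_of_indep_of_le_left h (hX.measurable_pathSup_sub_iSup u).comap_le).symm

theorem identDistrib_pathSup_sub (hX : IsLevy P X) [IsProbabilityMeasure P] {u : ℝ}
    (hu : 0 ≤ u) : IdentDistrib (fun ω => pathSup X u ω - X u ω) (pathSup X 0) P P := by
  have h0 : pathSup X 0 = fun ω => pathSup X 0 ω - X 0 ω := by
    funext ω
    rw [hX.init, sub_zero]
  have hmeas (K : ℕ) (v b : ℝ) :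
      NullMeasurableSet (dyadicGrid X v K ⁻¹' univ.pi fun _ => Iic b) P :=
    (hX.measurable_dyadicGrid v K
      (MeasurableSet.univ_pi fun _ => measurableSet_Iic)).nullMeasurableSet
  rw [h0]
  refine ⟨(hX.measurable_pathSup_sub u).aemeasurable, (hX.measurable_pathSup_sub 0).aemeasurable,
    Measure.ext_of_Iic _ _ fun b => ?_⟩
  rw [Measure.map_apply (hX.measurable_pathSup_sub u) measurableSet_Iic,
    Measure.map_apply (hX.measurable_pathSup_sub 0) measurableSet_Iic,
    hX.preimage_pathSup_sub_Iic, hX.preimage_pathSup_sub_Iic,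
    (antitone_preimage_dyadicGrid u b).measure_iInter (hmeas · u b) ⟨0, measure_ne_top _ _⟩,
    (antitone_preimage_dyadicGrid 0 b).measure_iInter (hmeas · 0 b) ⟨0, measure_ne_top _ _⟩]
  refine iInf_congr fun K => ?_
  rw [← Measure.map_apply (hX.measurable_dyadicGrid u K)
    (MeasurableSet.univ_pi fun _ => measurableSet_Iic), hX.map_dyadicGrid hu K,
    Measure.map_apply (hX.measurable_dyadicGrid 0 K)
    (MeasurableSet.univ_pi fun _ => measurableSet_Iic)]

theorem measure_pathSup_le (hX : IsLevy P X) [IsProbabilityMeasure P] {u : ℝ} (hu : 0 ≤ u)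
    (r : ℝ) : P {ω | pathSup X u ω ≤ r} = ∫⁻ ω, P {ω' | X u ω' ≤ r - pathSup X 0 ω} ∂P := by
  simpa using measure_add_le_eq_lintegral (hX.meas u).aemeasurable (hX.indepFun_pathSup_sub hu)
    (hX.identDistrib_pathSup_sub hu) r

theorem measure_pathInf_le (hX : IsLevy P X) [IsProbabilityMeasure P] {u : ℝ} (hu : 0 ≤ u)
    (r : ℝ) : P {ω | pathInf X u ω ≤ r} = ∫⁻ ω, P {ω' | X u ω' ≤ r - pathInf X 0 ω} ∂P := by
  have hind := (hX.neg.indepFun_pathSup_sub hu).comp measurable_neg measurable_neg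
  have hid := (hX.neg.identDistrib_pathSup_sub hu).comp measurable_neg
  simp only [Function.comp_def, pathSup_neg, neg_neg, neg_sub_neg, neg_sub] at hind hid
  simpa using measure_add_le_eq_lintegral (hX.meas u).aemeasurable hind hid r

lemma setLIntegral_Ioc_le (hX : IsLevy P X) {a u : ℝ} (ha : 0 ≤ a) (hu : 0 < u) (r : ℝ) :
    ∫⁻ t in Ioc u (u + 1), ENNReal.ofReal (Real.exp (a * t) / t) * P {ω | X t ω ≤ r} ≤
      ENNReal.ofReal (Real.exp (a * (u + 1)) / u) * P {ω | pathInf X u ω ≤ r} := by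
  calc _ ≤ ∫⁻ _ in Ioc u (u + 1),
        ENNReal.ofReal (Real.exp (a * (u + 1)) / u) * P {ω | pathInf X u ω ≤ r} := by
        refine setLIntegral_mono' measurableSet_Ioc fun t ht => ?_
        gcongr ENNReal.ofReal (Real.exp (a * ?_) / ?_) * P ?_
        · exact ht.2
        · exact ht.1.le
        · intro ω hω
          exact (csInf_le (hX.isBounded_image_Icc ω _ _).bddBelow
            (mem_image_of_mem _ (Ioc_subset_Icc_self ht))).trans hω
    _ = _ := by simp

lemma le_setLIntegral_Ioc (hX : IsLevy P X) {a u : ℝ} (ha : 0 ≤ a) (hu : 0 < u) (r : ℝ) :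
    ENNReal.ofReal (Real.exp (a * u) / (u + 1)) * P {ω | pathSup X u ω ≤ r} ≤
      ∫⁻ t in Ioc u (u + 1), ENNReal.ofReal (Real.exp (a * t) / t) * P {ω | X t ω ≤ r} := by
  calc _ = ∫⁻ _ in Ioc u (u + 1),
        ENNReal.ofReal (Real.exp (a * u) / (u + 1)) * P {ω | pathSup X u ω ≤ r} := by simp
    _ ≤ _ := by
        refine setLIntegral_mono' measurableSet_Ioc fun t ht => ?_
        have ht0 : 0 < t := hu.trans ht.1
        gcongr ENNReal.ofReal (Real.exp (a * ?_) / ?_) * P ?_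
        · exact ht.1.le
        · exact ht.2
        · intro ω hω
          exact (le_csSup (hX.isBounded_image_Icc ω _ _).bddAbove
            (mem_image_of_mem _ (Ioc_subset_Icc_self ht))).trans hω

end IsLevy

lemma lintegral_Ioi_one_eq_tsum (f : ℝ → ℝ≥0∞) :
    ∫⁻ t in Ioi 1, f t = ∑' n : ℕ, ∫⁻ t in Ioc ((n + 1 : ℕ) : ℝ) ((n + 1 : ℕ) + 1), f t := by
  have hunion : Ioi (1 : ℝ) = ⋃ n : ℕ, Ioc ((n + 1 : ℕ) : ℝ) ((n + 1 : ℕ) + 1) := by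
    ext x
    simp only [mem_Ioi, mem_iUnion, mem_Ioc]
    refine ⟨fun hx => ⟨⌈x⌉₊ - 2, ?_⟩, fun ⟨n, hn, _⟩ => lt_of_le_of_lt (by simp) hn⟩
    have h2 : 2 ≤ ⌈x⌉₊ := Nat.lt_ceil.2 (by exact_mod_cast hx)
    have hcast : (((⌈x⌉₊ - 2 + 1 : ℕ)) : ℝ) = ⌈x⌉₊ - 1 := by
      rw [show ⌈x⌉₊ - 2 + 1 = ⌈x⌉₊ - 1 by omega, Nat.cast_sub (by omega), Nat.cast_one]
    rw [hcast]
    constructor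
    · linarith [Nat.ceil_lt_add_one (by linarith : (0 : ℝ) ≤ x)]
    · linarith [Nat.le_ceil x]
  have hdisj :
      Pairwise (Function.onFun Disjoint fun n : ℕ => Ioc ((n + 1 : ℕ) : ℝ) ((n + 1 : ℕ) + 1)) :=
    (pairwise_disjoint_on _).2 fun m n hmn =>
      Ioc_disjoint_Ioc_of_le (by push_cast; exact_mod_cast (by omega : m + 1 + 1 ≤ n + 1))
  rw [hunion, Measure.restrict_iUnion hdisj fun _ => measurableSet_Ioc, lintegral_sum_measure]

lemma lintegral_Vharm_sub {Ω : Type*} [MeasurableSpace Ω] {P : Measure Ω} {X : ℝ → Ω → ℝ}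
    {Z : Ω → ℝ} (hZ : AEMeasurable Z P) (a r : ℝ) :
    ∫⁻ ω, Vharm P X a (r - Z ω) ∂P = ∑' n : ℕ, ENNReal.ofReal (Real.exp (a * (n + 1)) / (n + 1)) *
      ∫⁻ ω, P {ω' | X (n + 1 : ℕ) ω' ≤ r - Z ω} ∂P := by
  have hcdf (n : ℕ) : Antitone fun z => P {ω' | X (n + 1 : ℕ) ω' ≤ r - z} :=
    fun z z' h => measure_mono fun ω' (hω' : X _ ω' ≤ r - z') =>
      show X _ ω' ≤ r - z from hω'.trans (by linarith)
  unfold Vharm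
  refine (lintegral_tsum fun n => ?_).trans (tsum_congr fun n => ?_)
  · exact ((hcdf n).measurable.comp_aemeasurable hZ).const_mul _
  · exact lintegral_const_mul' _ _ ENNReal.ofReal_ne_top

/-- `S_1 = sup_{0≤t≤1} X_t` and `I_1 = inf_{0≤t≤1} X_t`; the two-sided estimate
`(1/2)·E[V_a^1(r − S_1)] ≤ ∫_1^∞ e^{at} t⁻¹ P{X_t ≤ r} dt ≤ e^a·E[V_a^1(r − I_1)]`. -/
theorem stmt9 {Ω : Type*} [MeasurableSpace Ω] (P : Measure Ω) [IsProbabilityMeasure P]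
    (X : ℝ → Ω → ℝ) (hX : IsLevy P X) (a r : ℝ) (ha : 0 < a)
    (S₁ I₁ : Ω → ℝ)
    (hS₁ : ∀ ω, S₁ ω = sSup ((fun t => X t ω) '' Set.Icc (0 : ℝ) 1))
    (hI₁ : ∀ ω, I₁ ω = sInf ((fun t => X t ω) '' Set.Icc (0 : ℝ) 1)) :
    (2 : ℝ≥0∞)⁻¹ * ∫⁻ ω, Vharm P X a (r - S₁ ω) ∂P ≤
        (∫⁻ t in Set.Ioi (1 : ℝ), ENNReal.ofReal (Real.exp (a * t) / t) * P {ω | X t ω ≤ r}) ∧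
    (∫⁻ t in Set.Ioi (1 : ℝ), ENNReal.ofReal (Real.exp (a * t) / t) * P {ω | X t ω ≤ r}) ≤
        ENNReal.ofReal (Real.exp a) * ∫⁻ ω, Vharm P X a (r - I₁ ω) ∂P := by
  obtain rfl : S₁ = pathSup X 0 := funext fun ω => by rw [hS₁, pathSup, zero_add]
  obtain rfl : I₁ = pathInf X 0 := funext fun ω => by rw [hI₁, pathInf, zero_add]
  have hu (n : ℕ) : (0 : ℝ) < (n + 1 : ℕ) := Nat.cast_pos.2 n.succ_pos
  rw [lintegral_Vharm_sub (hX.measurable_pathSup 0).aemeasurable,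
    lintegral_Vharm_sub (hX.measurable_pathInf 0).aemeasurable, lintegral_Ioi_one_eq_tsum]
  simp only [← hX.measure_pathSup_le (hu _).le, ← hX.measure_pathInf_le (hu _).le]
  constructor
  · rw [← ENNReal.tsum_mul_left]
    refine ENNReal.tsum_le_tsum fun n => le_trans ?_ (hX.le_setLIntegral_Ioc ha.le (hu n) r)
    rw [← mul_assoc, ← ENNReal.div_eq_inv_mul, ← ENNReal.ofReal_ofNat 2,
      ← ENNReal.ofReal_div_of_pos two_pos, div_div]
    gcongr <;> push_cast <;> linarith
  · rw [← ENNReal.tsum_mul_left]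
    refine ENNReal.tsum_le_tsum fun n => (hX.setLIntegral_Ioc_le ha.le (hu n) r).trans_eq ?_
    rw [← mul_assoc, ← ENNReal.ofReal_mul (Real.exp_pos a).le, mul_div_assoc', ← Real.exp_add]
    push_cast
    ring_nf
end

section
/- Let X be a Lévy process and fix a > 0, r ∈ ℝ. With I_1 = inf_{0≤t≤1} X_t and S_1 = sup_{0≤t≤1} X_t, one has E[U_a^1(r − S_1)] ≤ ∫_0^∞ e^{at} P{X_t ≤ r} dt ≤ e^a·E[U_a^1(r − I_1)], where U_a^1(x) = Σ_{n≥0} e^{an} P{X_n ≤ x}. -/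
open MeasureTheory ProbabilityTheory Set
open scoped ENNReal

/-- `U_a^1(x) = Σ_{n≥0} e^{an} P{X_n ≤ x}`. -/
noncomputable def Uexp {Ω : Type*} [MeasurableSpace Ω] (P : Measure Ω) (X : ℝ → Ω → ℝ)
    (a x : ℝ) : ℝ≥0∞ :=
  ∑' n : ℕ, ENNReal.ofReal (Real.exp (a * n)) * P {ω | X (n : ℕ) ω ≤ x}

/-!
Write `Fₙ(x) = P{Xₙ ≤ x}`. For `n ≤ t ≤ n + 1`, the increment `X_t - X_n` is independent of `X_n`
and distributed as `X_{t-n}`, so `P{X_t ≤ r} = ∫ Fₙ(r - X_{t-n}(ω)) dP(ω)`. Pathwise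
`I₁ ≤ X_{t-n} ≤ S₁` and `Fₙ` is monotone, hence `E[Fₙ(r - S₁)] ≤ P{X_t ≤ r} ≤ E[Fₙ(r - I₁)]`;
multiplying by `e^{an} ≤ e^{at} ≤ e^a e^{an}` and integrating over the intervals `(n, n + 1]`
gives both inequalities. Càdlàg paths make `S₁` and `I₁` finite, and measurable because they
only depend on the path at rational times and at `1`.
-/

open Filter Topology Bornology

section RightContinuous

lemma exists_mem_nhds_isBounded_image_of_cadlag {E : Type*} [PseudoMetricSpace E] {f : ℝ → E}
    {x : ℝ}
    (hr : ContinuousWithinAt f (Ici x) x) (hl : ∃ l, Tendsto f (𝓝[<] x) (𝓝 l)) :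
    ∃ U ∈ 𝓝 x, IsBounded (f '' U) := by
  obtain ⟨l, hl⟩ := hl
  refine ⟨f ⁻¹' (Metric.ball l 1 ∪ Metric.ball (f x) 1), ?_,
    (Metric.isBounded_ball.union Metric.isBounded_ball).subset (image_preimage_subset _ _)⟩
  rw [← nhdsLT_sup_nhdsGE x]
  exact ⟨mem_of_superset (hl (Metric.ball_mem_nhds l one_pos)) fun _ h => Or.inl h,
    mem_of_superset (hr (Metric.ball_mem_nhds (f x) one_pos)) fun _ h => Or.inr h⟩

lemma isBounded_image_of_cadlag {E : Type*} [PseudoMetricSpace E] {f : ℝ → E} {K : Set ℝ}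
    (hK : IsCompact K)
    (hr : ∀ x, ContinuousWithinAt f (Ici x) x) (hl : ∀ x, ∃ l, Tendsto f (𝓝[<] x) (𝓝 l)) :
    IsBounded (f '' K) :=
  isBounded_image_of_isLocallyBounded_of_isCompact hK fun x =>
    exists_mem_nhds_isBounded_image_of_cadlag (hr x) (hl x)

lemma forall_mem_Icc_of_rightContinuous {Y : Type*} [TopologicalSpace Y] {f : ℝ → Y}
    {a b : ℝ} {C : Set Y}
    (hr : ∀ x, ContinuousWithinAt f (Ici x) x) (hC : IsClosed C)
    (h : ∀ t ∈ Icc a b ∩ (range ((↑) : ℚ → ℝ) ∪ {b}), f t ∈ C) :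
    ∀ t ∈ Icc a b, f t ∈ C := by
  intro t ht
  rcases ht.2.eq_or_lt with rfl | htb
  · exact h t ⟨ht, Or.inr rfl⟩
  have hcl : t ∈ closure (Ioo t b ∩ range ((↑) : ℚ → ℝ)) := by
    have hsub := closure_mono
      (Rat.denseRange_cast.open_subset_closure_inter (isOpen_Ioo (a := t) (b := b)))
    rw [closure_closure] at hsub
    exact hsub (by rw [closure_Ioo htb.ne]; exact left_mem_Icc.2 htb.le)
  refine closure_minimal ?_ hC (((hr t).mono fun s hs => le_of_lt hs.1.1).mem_closure_image hcl)
  rintro _ ⟨s, ⟨hs, hsq⟩, rfl⟩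
  exact h s ⟨⟨ht.1.trans hs.1.le, hs.2.le⟩, Or.inl hsq⟩

end RightContinuous

section RightContinuousProcess

variable {Ω : Type*} [MeasurableSpace Ω] {X : ℝ → Ω → ℝ} {a b : ℝ}

lemma measurableSet_forall_mem_Icc (hmeas : ∀ t, Measurable (X t))
    (hr : ∀ ω t, ContinuousWithinAt (fun s => X s ω) (Ici t) t) {C : Set ℝ} (hC : IsClosed C) :
    MeasurableSet {ω | ∀ t ∈ Icc a b, X t ω ∈ C} := by
  set T := Icc a b ∩ (range ((↑) : ℚ → ℝ) ∪ {b})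
  have hT : T.Countable :=
    ((countable_range _).union (countable_singleton b)).mono inter_subset_right
  have hEq : {ω | ∀ t ∈ Icc a b, X t ω ∈ C} = ⋂ t ∈ T, X t ⁻¹' C := by
    ext ω
    simp only [mem_ofPred_eq, mem_iInter₂, mem_preimage]
    exact ⟨fun h t ht => h t ht.1, forall_mem_Icc_of_rightContinuous (hr ω) hC⟩
  rw [hEq]
  exact MeasurableSet.biInter hT fun t _ => hmeas t hC.measurableSet

lemma measurable_of_isLUB_image_Icc (hmeas : ∀ t, Measurable (X t))
    (hr : ∀ ω t, ContinuousWithinAt (fun s => X s ω) (Ici t) t) {S : Ω → ℝ}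
    (hS : ∀ ω, IsLUB ((fun t => X t ω) '' Icc a b) (S ω)) : Measurable S := by
  refine measurable_of_Iic fun c => ?_
  convert measurableSet_forall_mem_Icc (a := a) (b := b) hmeas hr (isClosed_Iic (a := c)) using 1
  ext ω
  exact (isLUB_le_iff (hS ω)).trans forall_mem_image

lemma measurable_of_isGLB_image_Icc (hmeas : ∀ t, Measurable (X t))
    (hr : ∀ ω t, ContinuousWithinAt (fun s => X s ω) (Ici t) t) {I : Ω → ℝ}
    (hI : ∀ ω, IsGLB ((fun t => X t ω) '' Icc a b) (I ω)) : Measurable I := by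
  refine measurable_of_Ici fun c => ?_
  convert measurableSet_forall_mem_Icc (a := a) (b := b) hmeas hr (isClosed_Ici (a := c)) using 1
  ext ω
  exact (le_isGLB_iff (hI ω)).trans forall_mem_image

end RightContinuousProcess

namespace IsLevy

variable {Ω : Type*} [MeasurableSpace Ω] {P : Measure Ω} {X : ℝ → Ω → ℝ} {s t : ℝ}

lemma indepFun_sub (hX : IsLevy P X) (hs : 0 ≤ s) (hst : s ≤ t) :
    IndepFun (X s) (fun ω => X t ω - X s ω) P := by
  set g : ℕ → ℝ := fun i => if i = 0 then 0 else if i = 1 then s else t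
  have hg : Monotone g := by
    refine monotone_nat_of_le_succ fun i => ?_
    rcases i with _ | _ | i <;> simp [g, hs, hst]
  have h := (hX.indepIncr 2 g hg le_rfl).indepFun (i := 0) (j := 1) (by decide)
  simpa [g, hX.init] using h

lemma measure_le_eq_lintegral [IsFiniteMeasure P] (hX : IsLevy P X) (hs : 0 ≤ s)
    (hst : s ≤ t) (r : ℝ) :
    P {ω | X t ω ≤ r} = ∫⁻ ω, P {ω' | X s ω' ≤ r - X (t - s) ω} ∂P := by
  set μ := P.map (X s)
  set ν := P.map (X (t - s))
  have hinc : Measurable fun ω => X t ω - X s ω := (hX.meas t).sub (hX.meas s)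
  have hpair : P.map (fun ω => (X s ω, X t ω - X s ω)) = μ.prod ν := by
    rw [(indepFun_iff_map_prod_eq_prod_map_map (hX.meas s).aemeasurable hinc.aemeasurable).1
      (hX.indepFun_sub hs hst), hX.stationary s t hs hst]
  have hA : MeasurableSet {p : ℝ × ℝ | p.1 + p.2 ≤ r} :=
    measurableSet_le (measurable_fst.add measurable_snd) measurable_const
  have hμ : Measurable fun y => μ (Iic (r - y)) :=
    Antitone.measurable fun _ _ h => measure_mono (Iic_subset_Iic.2 (by linarith))
  calc P {ω | X t ω ≤ r}
      = P ((fun ω => (X s ω, X t ω - X s ω)) ⁻¹' {p | p.1 + p.2 ≤ r}) := by simp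
    _ = μ.prod ν {p | p.1 + p.2 ≤ r} := by
      rw [← hpair, Measure.map_apply ((hX.meas s).prodMk hinc) hA]
    _ = ∫⁻ y, μ (Iic (r - y)) ∂ν := by
      rw [Measure.prod_apply_symm hA]
      congr! with y
      ext x
      simp [le_sub_iff_add_le]
    _ = ∫⁻ ω, P {ω' | X s ω' ≤ r - X (t - s) ω} ∂P := by
      rw [lintegral_map hμ (hX.meas _)]
      simp only [μ, Measure.map_apply (hX.meas s) measurableSet_Iic]
      rfl

lemma lintegral_measure_le_sub_le_measure [IsFiniteMeasure P] (hX : IsLevy P X) (hs : 0 ≤ s)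
    (hst : s ≤ t) (hts : t ≤ s + 1) {S : Ω → ℝ} (hS : ∀ ω, ∀ τ ∈ Icc (0 : ℝ) 1, X τ ω ≤ S ω)
    (r : ℝ) :
    ∫⁻ ω, P {ω' | X s ω' ≤ r - S ω} ∂P ≤ P {ω | X t ω ≤ r} := by
  rw [hX.measure_le_eq_lintegral hs hst]
  refine lintegral_mono fun ω => measure_mono (ofPred_subset_ofPred.2 fun _ h => h.trans ?_)
  linarith [hS ω (t - s) ⟨by linarith, by linarith⟩]

lemma measure_le_le_lintegral_measure_le_sub [IsFiniteMeasure P] (hX : IsLevy P X) (hs : 0 ≤ s)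
    (hst : s ≤ t) (hts : t ≤ s + 1) {I : Ω → ℝ} (hI : ∀ ω, ∀ τ ∈ Icc (0 : ℝ) 1, I ω ≤ X τ ω)
    (r : ℝ) :
    P {ω | X t ω ≤ r} ≤ ∫⁻ ω, P {ω' | X s ω' ≤ r - I ω} ∂P := by
  rw [hX.measure_le_eq_lintegral hs hst]
  refine lintegral_mono fun ω => measure_mono (ofPred_subset_ofPred.2 fun _ h => h.trans ?_)
  linarith [hI ω (t - s) ⟨by linarith, by linarith⟩]

end IsLevy

lemma iUnion_Ioc_natCast_add_one : ⋃ n : ℕ, Ioc (n : ℝ) (n + 1) = Ioi 0 := by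
  ext t
  simp only [mem_iUnion, mem_Ioc, mem_Ioi]
  refine ⟨fun ⟨n, hn, _⟩ => (Nat.cast_nonneg n).trans_lt hn, fun ht => ⟨⌈t⌉₊ - 1, ?_⟩⟩
  have hceil : 0 < ⌈t⌉₊ := Nat.ceil_pos.2 ht
  rw [Nat.cast_sub hceil, Nat.cast_one, sub_add_cancel]
  exact ⟨by linarith [Nat.ceil_lt_add_one ht.le], Nat.le_ceil t⟩

lemma setLIntegral_Ioi_zero_eq_tsum (f : ℝ → ℝ≥0∞) :
    ∫⁻ t in Ioi 0, f t = ∑' n : ℕ, ∫⁻ t in Ioc (n : ℝ) (n + 1), f t := by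
  rw [← iUnion_Ioc_natCast_add_one, lintegral_iUnion (fun _ => measurableSet_Ioc)]
  exact (pairwise_disjoint_Ioc_intCast (α := ℝ)).comp_of_injective (f := Nat.cast)
    Nat.cast_injective |>.mono fun m n h => by simpa using h

lemma le_setLIntegral_Ioc_add_one {f : ℝ → ℝ≥0∞} {c : ℝ≥0∞} (x : ℝ)
    (h : ∀ t ∈ Ioc x (x + 1), c ≤ f t) : c ≤ ∫⁻ t in Ioc x (x + 1), f t :=
  calc c = ∫⁻ _ in Ioc x (x + 1), c := by simp
    _ ≤ ∫⁻ t in Ioc x (x + 1), f t := setLIntegral_mono' measurableSet_Ioc h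

lemma setLIntegral_Ioc_add_one_le {f : ℝ → ℝ≥0∞} {c : ℝ≥0∞} (x : ℝ)
    (h : ∀ t ∈ Ioc x (x + 1), f t ≤ c) : ∫⁻ t in Ioc x (x + 1), f t ≤ c :=
  calc ∫⁻ t in Ioc x (x + 1), f t ≤ ∫⁻ _ in Ioc x (x + 1), c :=
      setLIntegral_mono' measurableSet_Ioc h
    _ = c := by simp

lemma lintegral_Uexp_comp {Ω : Type*} [MeasurableSpace Ω] (P : Measure Ω) (X : ℝ → Ω → ℝ)
    (a : ℝ) {Y : Ω → ℝ} (hY : Measurable Y) :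
    ∫⁻ ω, Uexp P X a (Y ω) ∂P =
      ∑' n : ℕ, ENNReal.ofReal (Real.exp (a * n)) * ∫⁻ ω, P {ω' | X n ω' ≤ Y ω} ∂P := by
  have hm (n : ℕ) : Measurable fun ω => P {ω' | X n ω' ≤ Y ω} := by
    have hF : Monotone fun x : ℝ => P {ω' | X n ω' ≤ x} := fun _ _ hxy =>
      measure_mono (ofPred_subset_ofPred.2 fun _ h => le_trans h hxy)
    exact hF.measurable.comp hY
  simp only [Uexp]
  rw [lintegral_tsum fun n => ((hm n).const_mul _).aemeasurable]
  exact tsum_congr fun n => lintegral_const_mul _ (hm n)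

/-- With `S_1 = sup_{0≤t≤1} X_t` and `I_1 = inf_{0≤t≤1} X_t`:
`E[U_a^1(r − S_1)] ≤ ∫_0^∞ e^{at} P{X_t ≤ r} dt ≤ e^a·E[U_a^1(r − I_1)]`. -/
theorem stmt10 {Ω : Type*} [MeasurableSpace Ω] (P : Measure Ω) [IsProbabilityMeasure P]
    (X : ℝ → Ω → ℝ) (hX : IsLevy P X) (a r : ℝ) (ha : 0 < a)
    (S₁ I₁ : Ω → ℝ)
    (hS₁ : ∀ ω, S₁ ω = sSup ((fun t => X t ω) '' Set.Icc (0 : ℝ) 1))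
    (hI₁ : ∀ ω, I₁ ω = sInf ((fun t => X t ω) '' Set.Icc (0 : ℝ) 1)) :
    (∫⁻ ω, Uexp P X a (r - S₁ ω) ∂P) ≤
        (∫⁻ t in Set.Ioi (0 : ℝ), ENNReal.ofReal (Real.exp (a * t)) * P {ω | X t ω ≤ r}) ∧
    (∫⁻ t in Set.Ioi (0 : ℝ), ENNReal.ofReal (Real.exp (a * t)) * P {ω | X t ω ≤ r}) ≤
        ENNReal.ofReal (Real.exp a) * ∫⁻ ω, Uexp P X a (r - I₁ ω) ∂P := by
  have hbdd (ω : Ω) : IsBounded ((fun t => X t ω) '' Icc (0 : ℝ) 1) :=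
    isBounded_image_of_cadlag isCompact_Icc (hX.rightCont ω) (hX.leftLim ω)
  have hne (ω : Ω) : ((fun t => X t ω) '' Icc (0 : ℝ) 1).Nonempty :=
    (nonempty_Icc.2 zero_le_one).image _
  have hLUB (ω : Ω) : IsLUB ((fun t => X t ω) '' Icc (0 : ℝ) 1) (S₁ ω) :=
    hS₁ ω ▸ isLUB_csSup (hne ω) (hbdd ω).bddAbove
  have hGLB (ω : Ω) : IsGLB ((fun t => X t ω) '' Icc (0 : ℝ) 1) (I₁ ω) :=
    hI₁ ω ▸ isGLB_csInf (hne ω) (hbdd ω).bddBelow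
  have hexp (n : ℕ) {t : ℝ} (ht : t ∈ Ioc (n : ℝ) (n + 1)) :
      ENNReal.ofReal (Real.exp (a * n)) ≤ ENNReal.ofReal (Real.exp (a * t)) ∧
      ENNReal.ofReal (Real.exp (a * t)) ≤
        ENNReal.ofReal (Real.exp a) * ENNReal.ofReal (Real.exp (a * n)) := by
    rw [← ENNReal.ofReal_mul (Real.exp_pos a).le, ← Real.exp_add]
    exact ⟨ENNReal.ofReal_le_ofReal (Real.exp_le_exp.2 (by nlinarith [ht.1])),
      ENNReal.ofReal_le_ofReal (Real.exp_le_exp.2 (by nlinarith [ht.2]))⟩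
  rw [lintegral_Uexp_comp P X a
      ((measurable_of_isLUB_image_Icc hX.meas hX.rightCont hLUB).const_sub r),
    lintegral_Uexp_comp P X a
      ((measurable_of_isGLB_image_Icc hX.meas hX.rightCont hGLB).const_sub r),
    setLIntegral_Ioi_zero_eq_tsum, ← ENNReal.tsum_mul_left]
  refine ⟨ENNReal.tsum_le_tsum fun n => le_setLIntegral_Ioc_add_one _ fun t ht => ?_,
    ENNReal.tsum_le_tsum fun n => setLIntegral_Ioc_add_one_le _ fun t ht => ?_⟩
  · exact mul_le_mul' (hexp n ht).1 (hX.lintegral_measure_le_sub_le_measure (Nat.cast_nonneg n)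
      ht.1.le ht.2 (fun ω τ hτ => (hLUB ω).1 (mem_image_of_mem _ hτ)) r)
  · rw [← mul_assoc]
    exact mul_le_mul' (hexp n ht).2 (hX.measure_le_le_lintegral_measure_le_sub (Nat.cast_nonneg n)
      ht.1.le ht.2 (fun ω τ hτ => (hGLB ω).1 (mem_image_of_mem _ hτ)) r)
end
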